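/- (Prucnal–Skvortsov) Medvedev's logic ML is structurally complete: every rule φ ⊢ ψ admissible in ML is derivable in ML, i.e., if for every substitution σ, σ(φ) ∈ ML implies σ(ψ) ∈ ML, then φ → ψ ∈ ML (equivalently, ψ is valid in every model of M_n in which φ is globally true). -/

import Mathlib

inductive Fml : Type where
  | atom : ℕ → Fml
  | bot  : Fml
  | and  : Fml → Fml → Fml
  | or   : Fml → Fml → Fml
  | imp  : Fml → Fml → Fml
deriving DecidableEq

/-- Intuitionistic negation: ¬φ := φ → ⊥. -/
def Fml.neg (φ : Fml) : Fml := .imp φ .bot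

/-- Biconditional. -/
def Fml.iff (φ ψ : Fml) : Fml := .and (.imp φ ψ) (.imp ψ φ)

/-- Disjunction of a list of formulas (empty disjunction is ⊥). -/
def disj : List Fml → Fml
  | [] => .bot
  | [φ] => φ
  | φ :: l => .or φ (disj l)

/-- Conjunction of a list of formulas (empty conjunction is ¬⊥). -/
def conj : List Fml → Fml
  | [] => Fml.neg .bot
  | [φ] => φ
  | φ :: l => .and φ (conj l)

/-- Substitution, extended homomorphically. -/
def Fml.subst (σ : ℕ → Fml) : Fml → Fml
  | .atom p => σ p
  | .bot => .bot
  | .and φ ψ => .and (φ.subst σ) (ψ.subst σ)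
  | .or φ ψ => .or (φ.subst σ) (ψ.subst σ)
  | .imp φ ψ => .imp (φ.subst σ) (ψ.subst σ)

/-- Hilbert-style provability for intuitionistic logic plus extra axioms `Ax`. -/
inductive Prov (Ax : Fml → Prop) : Fml → Prop where
  | ax {φ} : Ax φ → Prov Ax φ
  | k {φ ψ} : Prov Ax (.imp φ (.imp ψ φ))
  | s {φ ψ χ} : Prov Ax (.imp (.imp φ (.imp ψ χ)) (.imp (.imp φ ψ) (.imp φ χ)))
  | andI {φ ψ} : Prov Ax (.imp φ (.imp ψ (.and φ ψ)))
  | andE₁ {φ ψ} : Prov Ax (.imp (.and φ ψ) φ)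
  | andE₂ {φ ψ} : Prov Ax (.imp (.and φ ψ) ψ)
  | orI₁ {φ ψ} : Prov Ax (.imp φ (.or φ ψ))
  | orI₂ {φ ψ} : Prov Ax (.imp ψ (.or φ ψ))
  | orE {φ ψ χ} : Prov Ax (.imp (.imp φ χ) (.imp (.imp ψ χ) (.imp (.or φ ψ) χ)))
  | exfalso {φ} : Prov Ax (.imp .bot φ)
  | mp {φ ψ} : Prov Ax (.imp φ ψ) → Prov Ax φ → Prov Ax ψ

/-- No extra axioms: pure intuitionistic logic is `Prov NoAx`. -/
def NoAx : Fml → Prop := fun _ => False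

/-- Instances of the weak Kreisel–Putnam axiom schema. -/
def wKPAx : Fml → Prop := fun φ =>
  ∃ a b c : Fml, φ = .imp (.imp a.neg (.or b.neg c.neg))
    (.or (.imp a.neg b.neg) (.imp a.neg c.neg))

/-- Intuitionistic Kripke forcing over a preordered set of worlds. -/
def Force {W : Type} [Preorder W] (V : W → ℕ → Prop) : W → Fml → Prop
  | w, .atom p => V w p
  | _, .bot => False
  | w, .and φ ψ => Force V w φ ∧ Force V w ψ
  | w, .or φ ψ => Force V w φ ∨ Force V w ψ
  | w, .imp φ ψ => ∀ v, w ≤ v → Force V v φ → Force V v ψ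

/-- A valuation is monotone (persistent). -/
def MonoVal {W : Type} [Preorder W] (V : W → ℕ → Prop) : Prop :=
  ∀ ⦃w w'⦄, w ≤ w' → ∀ p, V w p → V w' p

/-- The Medvedev frame `M n`: nonempty subsets of `Fin n` ordered by reverse inclusion. -/
def Med (n : ℕ) : Type := {I : Finset (Fin n) // I.Nonempty}

instance {n : ℕ} : PartialOrder (Med n) where
  le I J := J.1 ⊆ I.1
  le_refl I := Finset.Subset.refl _
  le_trans I J K h h' := Finset.Subset.trans h' h
  le_antisymm I J h h' := Subtype.ext (Finset.Subset.antisymm h' h)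

instance {n : ℕ} : DecidableEq (Med n) := Subtype.instDecidableEq

/-- Validity on the Medvedev frame `M n`. -/
def MedValid (n : ℕ) (φ : Fml) : Prop :=
  ∀ V : Med n → ℕ → Prop, MonoVal V → ∀ w, Force V w φ

/-- Medvedev's logic of finite problems. -/
def ML (φ : Fml) : Prop := ∀ n, MedValid n φ

/-- The singleton world `{i}` of `M n`. -/
def single {n : ℕ} (i : Fin n) : Med n := ⟨{i}, Finset.singleton_nonempty i⟩

/-- Exponentiation on ℕ∞ (anything involving ∞ gives ∞). -/
def epow : ℕ∞ → ℕ∞ → ℕ∞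
  | some a, some b => some (a ^ b)
  | _, _ => ⊤

/-- Kreisel–Putnam rank. -/
def rank : Fml → ℕ∞
  | .imp _ .bot => 1
  | .or φ ψ => rank φ + rank ψ
  | .and φ ψ => rank φ * rank ψ
  | .imp φ ψ => epow (rank ψ) (rank φ)
  | _ => ⊤

/-- Disjunction of `α i` over a finite index set. -/
noncomputable def bigOrOn {n : ℕ} (α : Fin n → Fml) (I : Finset (Fin n)) : Fml :=
  disj (I.toList.map α)

/-- `α_I := ¬¬⋁_{i ∈ I} α_i`. -/
noncomputable def alphaF {n : ℕ} (α : Fin n → Fml) (I : Finset (Fin n)) : Fml :=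
  Fml.neg (Fml.neg (bigOrOn α I))

/-! Let `V` be a valuation on `M n` and `K` a world forcing `φ`. With the formulas `α_i` of
`classFml` and `α_S = ¬¬⋁_{i ∈ S} α_i`, put `σ(p) = ⋁ {α_S | S ⊆ K, S ⊩_V p}`. For every
valuation `W` on any `M m`, sending an endpoint `{k}` of `M m` to the unique `i ∈ K` with
`{k} ⊩_W α_i` induces a p-morphism `f_W` from `M m` into the cone of `K` with
`J ⊩_W σ(χ) ↔ f_W(J) ⊩_V χ`. Hence `σ(φ)` is valid on every `M m`, so by admissibility `σ(ψ)` is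
valid too. For the universal valuation `u_n` the map `f_{u_n}` fixes `K`, so `K ⊩_V ψ`. -/

section KripkeForcing

variable {W : Type} [Preorder W]

lemma force_mono {V : W → ℕ → Prop} (hV : MonoVal V) :
    ∀ (χ : Fml) {w w' : W}, w ≤ w' → Force V w χ → Force V w' χ
  | .atom p, _, _, h, hf => hV h p hf
  | .bot, _, _, _, hf => hf.elim
  | .and a b, _, _, h, hf => ⟨force_mono hV a h hf.1, force_mono hV b h hf.2⟩
  | .or a b, _, _, h, hf => hf.imp (force_mono hV a h) (force_mono hV b h)
  | .imp _ _, _, _, h, hf => fun v hv ha => hf v (h.trans hv) ha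

variable (V : W → ℕ → Prop)

lemma force_disj_iff (w : W) : ∀ l : List Fml, Force V w (disj l) ↔ ∃ χ ∈ l, Force V w χ
  | [] => by simp [disj, Force]
  | [χ] => by simp [disj]
  | χ :: ξ :: l => by
    simp [disj, Force, force_disj_iff w (ξ :: l)]

lemma force_conj_iff (w : W) : ∀ l : List Fml, Force V w (conj l) ↔ ∀ χ ∈ l, Force V w χ
  | [] => by simp [conj, Fml.neg, Force]
  | [χ] => by simp [conj]
  | χ :: ξ :: l => by
    simp only [conj, Force, force_conj_iff w (ξ :: l), List.forall_mem_cons]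

lemma force_bigOrOn_iff (w : W) {n : ℕ} (α : Fin n → Fml) (I : Finset (Fin n)) :
    Force V w (bigOrOn α I) ↔ ∃ i ∈ I, Force V w (α i) := by
  simp [bigOrOn, force_disj_iff]

theorem force_subst_iff_of_pMorphism {W' : Type} [Preorder W'] {U : W' → ℕ → Prop}
    {σ : ℕ → Fml} {f : W' → W} (hf : Monotone f)
    (hback : ∀ w v, f w ≤ v → ∃ w', w ≤ w' ∧ f w' = v)
    (hatom : ∀ w p, Force U w (σ p) ↔ V (f w) p) :
    ∀ (χ : Fml) (w : W'), Force U w (χ.subst σ) ↔ Force V (f w) χ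
  | .atom p, w => hatom w p
  | .bot, _ => Iff.rfl
  | .and a b, w => and_congr (force_subst_iff_of_pMorphism hf hback hatom a w)
      (force_subst_iff_of_pMorphism hf hback hatom b w)
  | .or a b, w => or_congr (force_subst_iff_of_pMorphism hf hback hatom a w)
      (force_subst_iff_of_pMorphism hf hback hatom b w)
  | .imp a b, w => by
    have iha := force_subst_iff_of_pMorphism hf hback hatom a
    have ihb := force_subst_iff_of_pMorphism hf hback hatom b
    constructor
    · intro h v hv ha
      obtain ⟨w', hww', rfl⟩ := hback w v hv
      exact (ihb w').mp (h w' hww' ((iha w').mpr ha))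
    · intro h w' hww' ha
      exact (ihb w').mpr (h (f w') (hf hww') ((iha w').mp ha))

end KripkeForcing

namespace Med

variable {n m : ℕ}

lemma le_single_of_mem {J : Med n} {k : Fin n} (hk : k ∈ J.1) : J ≤ single k :=
  Finset.singleton_subset_iff.mpr hk

lemma eq_single_of_single_le {k : Fin n} {J : Med n} (h : single k ≤ J) : J = single k :=
  Subtype.ext ((Finset.subset_singleton_iff.mp h).resolve_left J.2.ne_empty)

def map (g : Fin m → Fin n) (J : Med m) : Med n := ⟨J.1.image g, J.2.image g⟩

lemma map_mono (g : Fin m → Fin n) : Monotone (map g) :=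
  fun _ _ h => Finset.image_subset_image h

lemma exists_map_eq_of_map_le (g : Fin m → Fin n) (J : Med m) (I : Med n) (h : map g J ≤ I) :
    ∃ J', J ≤ J' ∧ map g J' = I := by
  classical
  have hI : ∀ i ∈ I.1, ∃ k ∈ J.1, g k = i := fun i hi => Finset.mem_image.mp (h hi)
  obtain ⟨i₀, hi₀⟩ := I.2
  obtain ⟨k₀, hk₀, rfl⟩ := hI _ hi₀
  refine ⟨⟨J.1.filter (g · ∈ I.1), k₀, Finset.mem_filter.mpr ⟨hk₀, hi₀⟩⟩,
    Finset.filter_subset _ _, Subtype.ext (Finset.ext fun i => ?_)⟩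
  simp only [map, Finset.mem_image, Finset.mem_filter]
  constructor
  · rintro ⟨k, ⟨-, hk⟩, rfl⟩
    exact hk
  · intro hi
    obtain ⟨k, hk, rfl⟩ := hI i hi
    exact ⟨k, ⟨hk, hi⟩, rfl⟩

variable {W : Med m → ℕ → Prop}

lemma force_neg_single_iff {k : Fin m} {χ : Fml} :
    Force W (single k) χ.neg ↔ ¬ Force W (single k) χ :=
  ⟨fun hf hc => hf _ le_rfl hc, fun hn _ hv hc => hn (eq_single_of_single_le hv ▸ hc)⟩

lemma force_neg_neg_iff {J : Med m} {χ : Fml} :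
    Force W J χ.neg.neg ↔ ∀ k ∈ J.1, Force W (single k) χ := by
  constructor
  · intro hf k hk
    by_contra hc
    exact hf _ (le_single_of_mem hk) (force_neg_single_iff.mpr hc)
  · intro hall v hv hneg
    obtain ⟨k, hk⟩ := v.2
    exact hneg (single k) (le_single_of_mem hk) (hall k (hv hk))

lemma force_alphaF_iff {α : Fin n → Fml} {g : Fin m → Fin n} {S : Finset (Fin n)}
    (hα : ∀ k, ∀ i ∈ S, Force W (single k) (α i) ↔ i = g k) (J : Med m) :
    Force W J (alphaF α S) ↔ ∀ k ∈ J.1, g k ∈ S := by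
  simp only [alphaF, force_neg_neg_iff, force_bigOrOn_iff]
  refine forall₂_congr fun k _ => ⟨?_, fun hg => ⟨g k, hg, (hα k _ hg).mpr rfl⟩⟩
  rintro ⟨i, hi, hf⟩
  exact (hα k i hi).mp hf ▸ hi

end Med

section Classification

open Med

variable {n m : ℕ}

noncomputable def negConj (s : Finset (Fin n)) : Fml :=
  conj ((s.sort (· ≤ ·)).map fun j => Fml.neg (.atom j.val))

lemma force_negConj_single_iff {W : Med m → ℕ → Prop} {k : Fin m} {s : Finset (Fin n)} :
    Force W (single k) (negConj s) ↔ ∀ j ∈ s, ¬ W (single k) j.val := by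
  simp only [negConj, force_conj_iff, List.forall_mem_map, Finset.mem_sort,
    force_neg_single_iff]
  rfl

variable (K : Med n)

/-- The formulas `α_i` for `i ∈ K`: `¬p_j` for all `j < i` in `K`, and `p_i` unless `i` is the
largest element of `K`. Over the endpoints they are mutually exclusive and exhaustive. -/
noncomputable def classFml (i : Fin n) : Fml :=
  if i = K.1.max' K.2 then negConj (K.1.filter (· < i))
  else .and (negConj (K.1.filter (· < i))) (.atom i.val)

open Classical in
noncomputable def classify (W : Med m → ℕ → Prop) (k : Fin m) : Fin n :=
  (K.1.filter fun i => i = K.1.max' K.2 ∨ W (single k) i.val).min'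
    ⟨_, Finset.mem_filter.mpr ⟨K.1.max'_mem K.2, Or.inl rfl⟩⟩

variable (W : Med m → ℕ → Prop)

lemma eq_classify_iff (k : Fin m) {i : Fin n} (hi : i ∈ K.1) :
    i = classify K W k ↔
      (i = K.1.max' K.2 ∨ W (single k) i.val) ∧
        ∀ j ∈ K.1.filter (· < i), ¬ W (single k) j.val := by
  rw [eq_comm]
  refine (Finset.min'_eq_iff _ _ _).trans ?_
  simp only [Finset.mem_filter, hi, true_and, and_congr_right_iff]
  intro _
  refine ⟨fun h j ⟨hj, hji⟩ hW => (h j ⟨hj, Or.inr hW⟩).not_gt hji, ?_⟩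
  rintro h j ⟨hj, rfl | hW⟩
  · exact K.1.le_max' i hi
  · exact not_lt.mp fun hji => h j ⟨hj, hji⟩ hW

open Classical in
lemma classify_mem (k : Fin m) : classify K W k ∈ K.1 :=
  Finset.filter_subset _ _ (Finset.min'_mem _ _)

lemma force_classFml_single_iff (k : Fin m) {i : Fin n} (hi : i ∈ K.1) :
    Force W (single k) (classFml K i) ↔ i = classify K W k := by
  rw [eq_classify_iff K W k hi, classFml]
  split_ifs with hmax
  · simp [force_negConj_single_iff, hmax]
  · simp [Force, force_negConj_single_iff, hmax, and_comm]

open Classical in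
noncomputable def psSubst (V : Med n → ℕ → Prop) (p : ℕ) : Fml :=
  disj (((Finset.univ : Finset (Finset (Fin n))).filter
    fun S => S ⊆ K.1 ∧ ∃ hS : S.Nonempty, V ⟨S, hS⟩ p).toList.map (alphaF (classFml K)))

lemma map_classify_subset (J : Med m) : (map (classify K W) J).1 ⊆ K.1 :=
  Finset.image_subset_iff.mpr fun k _ => classify_mem K W k

lemma force_psSubst_iff {V : Med n → ℕ → Prop} (hV : MonoVal V) (J : Med m) (p : ℕ) :
    Force W J (psSubst K V p) ↔ V (map (classify K W) J) p := by
  have hα {S : Finset (Fin n)} (hS : S ⊆ K.1) :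
      Force W J (alphaF (classFml K) S) ↔ (map (classify K W) J).1 ⊆ S :=
    (force_alphaF_iff (fun k _ hi => force_classFml_single_iff K W k (hS hi)) J).trans
      Finset.image_subset_iff.symm
  simp only [psSubst, force_disj_iff, List.mem_map, Finset.mem_toList, Finset.mem_filter,
    Finset.mem_univ, true_and]
  constructor
  · rintro ⟨_, ⟨S, ⟨hSK, hS, hVS⟩, rfl⟩, hJ⟩
    exact hV (w := ⟨S, hS⟩) ((hα hSK).mp hJ) p hVS
  · intro hVJ
    exact ⟨_, ⟨_, ⟨map_classify_subset K W J, _, hVJ⟩, rfl⟩,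
      (hα (map_classify_subset K W J)).mpr subset_rfl⟩

theorem force_subst_psSubst_iff {V : Med n → ℕ → Prop} (hV : MonoVal V) (χ : Fml)
    (J : Med m) :
    Force W J (χ.subst (psSubst K V)) ↔ Force V (map (classify K W) J) χ :=
  force_subst_iff_of_pMorphism V (map_mono _) (exists_map_eq_of_map_le _)
    (force_psSubst_iff K W hV) χ J

end Classification

section UniversalValuation

open Med

def uVal (n : ℕ) (J : Med n) (q : ℕ) : Prop := ∃ i : Fin n, q = i.val ∧ J = single i

lemma uVal_mono (n : ℕ) : MonoVal (uVal n) := by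
  rintro J J' hle _ ⟨i, rfl, rfl⟩
  exact ⟨i, rfl, eq_single_of_single_le hle⟩

lemma uVal_single_iff {n : ℕ} {i k : Fin n} : uVal n (single k) i.val ↔ i = k := by
  constructor
  · rintro ⟨i', hi, hk⟩
    have := congrArg Subtype.val hk
    simp only [single, Finset.singleton_inj] at this
    exact Fin.ext hi ▸ this.symm
  · rintro rfl
    exact ⟨i, rfl, rfl⟩

lemma classify_uVal {n : ℕ} (K : Med n) {k : Fin n} (hk : k ∈ K.1) :
    classify K (uVal n) k = k := by
  refine ((eq_classify_iff K _ k hk).mpr ⟨Or.inr (uVal_single_iff.mpr rfl), ?_⟩).symm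
  intro j hj hjk
  exact (Finset.mem_filter.mp hj).2.ne (uVal_single_iff.mp hjk)

lemma map_classify_uVal_self {n : ℕ} (K : Med n) : map (classify K (uVal n)) K = K :=
  Subtype.ext <| (Finset.image_congr fun _ hk => classify_uVal K hk).trans Finset.image_id

end UniversalValuation

/-- Prucnal–Skvortsov: Medvedev's logic is structurally complete: every
admissible rule `φ ⊢ ψ` is derivable, i.e. `φ → ψ ∈ ML`. -/
theorem stmt18 (φ ψ : Fml)
    (h : ∀ σ : ℕ → Fml, ML (φ.subst σ) → ML (ψ.subst σ)) :
    ML (.imp φ ψ) := by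
  intro n V hV _ K _ hφ
  have hσφ : ML (φ.subst (psSubst K V)) := fun m W _ J =>
    (force_subst_psSubst_iff K W hV φ J).mpr
      (force_mono hV φ (map_classify_subset K W J) hφ)
  have hσψ := h _ hσφ n (uVal n) (uVal_mono n) K
  rwa [force_subst_psSubst_iff K _ hV, map_classify_uVal_self] at hσψ
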